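/- Rigidity of local maps between standard complexes with common prefix: if the parameter sequences of standard complexes C = C(a_i,b_i) and C' = C(a_i',b_i') agree up to index k, and f : C → C' is a local map, then for every 0 ≤ i ≤ k the image f(T_i) is supported by T_i' (i.e., the coefficient of T_i' in f(T_i), written in the standard basis, is a nonzero element of F[U] with nonzero constant term where applicable). -/

import Mathlib

open Polynomial

abbrev F2 : Type := ZMod 2
abbrev R : Type := Polynomial F2

noncomputable section

namespace AI

/-- The variable `U`. -/
def Uu : R := Polynomial.X

/-- The free `R`-module of rank `n`. -/
abbrev V (n : ℕ) : Type := Fin n → R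

/-- The `i`-th standard basis vector. -/
def e {n : ℕ} (i : Fin n) : V n := fun j => if j = i then 1 else 0

/-- The `i`-th standard basis vector over `F2`. -/
def e2 {n : ℕ} (i : Fin n) : Fin n → F2 := fun j => if j = i then 1 else 0

/-- `x` lies in the image of multiplication by `U`. -/
def modU {n : ℕ} (x : V n) : Prop := ∀ j, (x j).coeff 0 = 0

/-- `x` is homogeneous of degree `c` with respect to the generator gradings `gr`
(where `deg U = -2`). -/
def IsHomog {n : ℕ} (gr : Fin n → ℤ) (c : ℤ) (x : V n) : Prop :=
  ∀ (j : Fin n) (m : ℕ), (x j).coeff m ≠ 0 → gr j - 2 * (m : ℤ) = c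

/-- `f` is a graded `R`-linear map of degree `dg`. -/
def GradedMap {m n : ℕ} (gr₁ : Fin m → ℤ) (gr₂ : Fin n → ℤ) (dg : ℤ)
    (f : V m →ₗ[R] V n) : Prop :=
  ∀ i : Fin m, IsHomog gr₂ (gr₁ i + dg) (f (e i))

/-- The raw data of a free finitely generated `ℤ`-graded complex over `R = F[U]`. -/
structure PreCplx where
  n : ℕ
  gr : Fin n → ℤ
  d : V n →ₗ[R] V n

def IsCycle (C : PreCplx) (x : V C.n) : Prop := C.d x = 0

def IsBdry (C : PreCplx) (x : V C.n) : Prop := ∃ y, C.d y = x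

/-- `x` is a cycle representing a `U`-nontorsion homology class. -/
def NontorsionClass (C : PreCplx) (x : V C.n) : Prop :=
  IsCycle C x ∧ ∀ k : ℕ, ¬ IsBdry C ((Uu ^ k) • x)

/-- `U⁻¹H_*(C) ≅ F[U, U⁻¹]`, generated by a degree-zero cycle (normalization
convention: the maximal degree of a `U`-nontorsion cycle class is zero, so the
localized homology is supported in even degrees). -/
def HtowerCond (C : PreCplx) : Prop :=
  ∃ x : V C.n, IsCycle C x ∧ IsHomog C.gr 0 x ∧
    (∀ k : ℕ, ¬ IsBdry C ((Uu ^ k) • x)) ∧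
    (∀ y : V C.n, IsCycle C y →
      ∃ (k : ℕ) (p : R) (z : V C.n), (Uu ^ k) • y = p • x + C.d z)

/-- `C` is a genuine graded chain complex. -/
def IsCplx (C : PreCplx) : Prop :=
  GradedMap C.gr C.gr (-1) C.d ∧ C.d ∘ₗ C.d = 0

/-- `f` and `g` are homotopic mod `U`. -/
def HomotopicModU (C₁ C₂ : PreCplx) (f g : V C₁.n →ₗ[R] V C₂.n) : Prop :=
  ∃ H : V C₁.n →ₗ[R] V C₂.n, GradedMap C₁.gr C₂.gr 1 H ∧
    ∀ x, modU ((f + g + H ∘ₗ C₁.d + C₂.d ∘ₗ H) x)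

/-- The raw data of an almost ι-complex. -/
structure PreAI extends PreCplx where
  ι : V n →ₗ[R] V n

/-- `ω = 1 + ι`. -/
def omega (C : PreAI) : V C.n →ₗ[R] V C.n := LinearMap.id + C.ι

/-- `C` is an almost ι-complex. -/
def IsAICplx (C : PreAI) : Prop :=
  IsCplx C.toPreCplx ∧
  GradedMap C.gr C.gr 0 C.ι ∧
  (∀ x, modU ((C.ι ∘ₗ C.d + C.d ∘ₗ C.ι) x)) ∧
  HomotopicModU C.toPreCplx C.toPreCplx (C.ι ∘ₗ C.ι) LinearMap.id ∧
  HtowerCond C.toPreCplx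

/-- `C` is a genuine ι-complex: `ι` is an honest chain map whose square is
genuinely chain homotopic to the identity. -/
def IsIotaCplx (C : PreAI) : Prop :=
  IsCplx C.toPreCplx ∧
  GradedMap C.gr C.gr 0 C.ι ∧
  C.ι ∘ₗ C.d = C.d ∘ₗ C.ι ∧
  (∃ H : V C.n →ₗ[R] V C.n, GradedMap C.gr C.gr 1 H ∧
    C.ι ∘ₗ C.ι + LinearMap.id = H ∘ₗ C.d + C.d ∘ₗ H) ∧
  HtowerCond C.toPreCplx

/-- A reduced complex: the differential vanishes mod `U`. -/
def Reduced (C : PreAI) : Prop := ∀ x, modU (C.d x)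

/-- `f` is an almost ι-morphism. -/
def isAIMorphism (C₁ C₂ : PreAI) (f : V C₁.n →ₗ[R] V C₂.n) : Prop :=
  GradedMap C₁.gr C₂.gr 0 f ∧
  f ∘ₗ C₁.d = C₂.d ∘ₗ f ∧
  HomotopicModU C₁.toPreCplx C₂.toPreCplx (f ∘ₗ C₁.ι) (C₂.ι ∘ₗ f)

/-- A local map: an almost ι-morphism inducing an isomorphism on `U`-localized
homology (equivalently, with the normalization conventions in force, preserving
`U`-nontorsion cycle classes). -/
def isLocalMap (C₁ C₂ : PreAI) (f : V C₁.n →ₗ[R] V C₂.n) : Prop :=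
  isAIMorphism C₁ C₂ f ∧
  ∀ x, NontorsionClass C₁.toPreCplx x → NontorsionClass C₂.toPreCplx (f x)

/-- Local equivalence of almost ι-complexes. -/
def LocallyEquiv (C₁ C₂ : PreAI) : Prop :=
  (∃ f, isLocalMap C₁ C₂ f) ∧ (∃ g, isLocalMap C₂ C₁ g)

/-- The tensor product (over `R`) of linear maps between free modules,
in the bases indexed by `finProdFinEquiv`. -/
def tmap {m n m' n' : ℕ} (f : V m →ₗ[R] V m') (g : V n →ₗ[R] V n') :
    V (m * n) →ₗ[R] V (m' * n') where
  toFun x := fun p => ∑ q : Fin (m * n),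
    x q * f (e (finProdFinEquiv.symm q).1) (finProdFinEquiv.symm p).1
        * g (e (finProdFinEquiv.symm q).2) (finProdFinEquiv.symm p).2
  map_add' x y := by
    funext p
    simp [Pi.add_apply, add_mul, Finset.sum_add_distrib]
  map_smul' c x := by
    funext p
    simp only [RingHom.id_apply, Pi.smul_apply, smul_eq_mul, Finset.mul_sum]
    exact Finset.sum_congr rfl fun q _ => by ring

/-- The tensor product of complexes. -/
def tensorPre (C₁ C₂ : PreCplx) : PreCplx where
  n := C₁.n * C₂.n
  gr := fun q => C₁.gr (finProdFinEquiv.symm q).1 + C₂.gr (finProdFinEquiv.symm q).2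
  d := tmap C₁.d LinearMap.id + tmap LinearMap.id C₂.d

/-- The tensor product of almost ι-complexes. -/
def tensorAI (C₁ C₂ : PreAI) : PreAI where
  toPreCplx := tensorPre C₁.toPreCplx C₂.toPreCplx
  ι := tmap C₁.ι C₂.ι

/-- The transpose of a square matrix map (the dual map in the dual basis). -/
def tr {n : ℕ} (f : V n →ₗ[R] V n) : V n →ₗ[R] V n where
  toFun x := fun j => ∑ i : Fin n, x i * f (e j) i
  map_add' x y := by
    funext j
    simp [Pi.add_apply, add_mul, Finset.sum_add_distrib]
  map_smul' c x := by
    funext j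
    simp only [RingHom.id_apply, Pi.smul_apply, smul_eq_mul, Finset.mul_sum]
    exact Finset.sum_congr rfl fun i _ => by ring

/-- The dual complex. -/
def dualPre (C : PreCplx) : PreCplx where
  n := C.n
  gr := fun i => -C.gr i
  d := tr C.d

/-- The dual almost ι-complex. -/
def dualAI (C : PreAI) : PreAI where
  toPreCplx := dualPre C.toPreCplx
  ι := tr C.ι

/-- The trivial complex `C(0) = (F[U], ∂ = 0, ι = id)`. -/
def cZero : PreAI := ⟨⟨1, fun _ => 0, 0⟩, LinearMap.id⟩

/-- The contraction map `C ⊗ C^∨ → F[U]`, `x ⊗ y ↦ y(x)`. -/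
def contr (n : ℕ) : V (n * n) →ₗ[R] V 1 where
  toFun x := fun _ => ∑ i : Fin n, x (finProdFinEquiv (i, i))
  map_add' x y := by funext j; simp [Pi.add_apply, Finset.sum_add_distrib]
  map_smul' c x := by
    funext j
    simp only [RingHom.id_apply, Pi.smul_apply, smul_eq_mul, Finset.mul_sum]

/-! ### Standard and augmented complexes -/

/-- The `i`-th symbol (0-indexed) of the parameter sequence, padded by zeros. -/
def seqAt (M : List ℤ) (i : ℕ) : ℤ := M.getD i 0

/-- Grading step of a `b`-arrow. -/
def bstep (b : ℤ) : ℤ := (if 0 < b then 1 else -1) - 2 * b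

/-- Grading of the generator `T_i` of the standard/augmented complex. -/
def stdGr (M : List ℤ) (i : ℕ) : ℤ :=
  ∑ s ∈ Finset.range i, if s % 2 = 1 then bstep (seqAt M s) else 0

/-- A linear endomorphism of `V n` given by a matrix of coefficients. -/
def ofMatrix {n : ℕ} (c : ℕ → ℕ → R) : V n →ₗ[R] V n where
  toFun x := fun j => ∑ i : Fin n, x i * c i j
  map_add' x y := by
    funext j
    simp [Pi.add_apply, add_mul, Finset.sum_add_distrib]
  map_smul' r x := by
    funext j
    simp only [RingHom.id_apply, Pi.smul_apply, smul_eq_mul, Finset.mul_sum]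
    exact Finset.sum_congr rfl fun i _ => by ring

/-- Matrix of the differential of the standard/augmented complex: the `b`-symbol
at (0-indexed) odd position `s` of `M` relates `T_s` and `T_{s+1}`. -/
def dCoef (M : List ℤ) (i j : ℕ) : R :=
  if i % 2 = 1 ∧ seqAt M i < 0 ∧ j = i + 1 then Uu ^ (seqAt M i).natAbs
  else if i % 2 = 0 ∧ 0 < i ∧ 0 < seqAt M (i - 1) ∧ j + 1 = i then
    Uu ^ (seqAt M (i - 1)).natAbs
  else 0

/-- Matrix of `ω = 1 + ι` on the standard/augmented complex: the `a`-symbol at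
(0-indexed) even position `s` of `M` relates `T_s` and `T_{s+1}`. -/
def wCoef (M : List ℤ) (i j : ℕ) : R :=
  if i % 2 = 0 ∧ seqAt M i = -1 ∧ j = i + 1 then 1
  else if i % 2 = 1 ∧ seqAt M (i - 1) = 1 ∧ j + 1 = i then 1
  else 0

/-- Matrix of `ι = 1 + ω` (char 2). -/
def iCoef (M : List ℤ) (i j : ℕ) : R :=
  (if i = j then 1 else 0) + wCoef M i j

/-- The standard (even length) or augmented (odd length) complex on generators
`T_0, …, T_{M.length}` determined by the symbol sequence `M`. -/
def symCplx (M : List ℤ) : PreAI :=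
  ⟨⟨M.length + 1, fun i => stdGr M i, ofMatrix (dCoef M)⟩, ofMatrix (iCoef M)⟩

/-- Validity of a standard parameter sequence. -/
def StdParams (M : List ℤ) : Prop :=
  M.length % 2 = 0 ∧
  ∀ i < M.length, if i % 2 = 0 then seqAt M i = 1 ∨ seqAt M i = -1 else seqAt M i ≠ 0

/-- Validity of an augmented parameter sequence. -/
def AugParams (M : List ℤ) : Prop :=
  M.length % 2 = 1 ∧
  ∀ i < M.length, if i % 2 = 0 then seqAt M i = 1 ∨ seqAt M i = -1 else seqAt M i ≠ 0

/-- The modified order `<!` on `ℤ`: `−1 <! −2 <! ⋯ <! 0 <! ⋯ <! 2 <! 1`. -/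
def ltB (x y : ℤ) : Prop :=
  (x < 0 ∧ 0 ≤ y) ∨ (x ≤ 0 ∧ 0 < y) ∨ (x < 0 ∧ y < 0 ∧ y < x) ∨ (0 < x ∧ 0 < y ∧ y < x)

def leB (x y : ℤ) : Prop := ltB x y ∨ x = y

/-- Strict lexicographic order on (zero-padded) parameter sequences. -/
def lexLt (M M' : List ℤ) : Prop :=
  ∃ k : ℕ, (∀ i < k, seqAt M i = seqAt M' i) ∧ ltB (seqAt M k) (seqAt M' k)

def lexLe (M M' : List ℤ) : Prop := lexLt M M' ∨ ∀ i, seqAt M i = seqAt M' i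

/-- A short map from the standard (even `M.length`) or augmented (odd `M.length`)
complex determined by `M` to `A`: the `ω`-condition (standard case) resp. the
`∂`-condition (augmented case) is waived on the final generator. -/
def isShortMap (M : List ℤ) (A : PreAI) (f : V (M.length + 1) →ₗ[R] V A.n) : Prop :=
  GradedMap (symCplx M).gr A.gr 0 f ∧
  (∀ i : Fin (M.length + 1), ((i : ℕ) < M.length ∨ M.length % 2 = 0) →
    A.d (f (e i)) = f ((symCplx M).d (e i))) ∧
  (∀ i : Fin (M.length + 1), ((i : ℕ) < M.length ∨ M.length % 2 = 1) →
    modU ((omega A) (f (e i)) + f ((omega (symCplx M)) (e i))))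

/-- A local short map: `T_0` goes to a `U`-nontorsion cycle class. -/
def isLocalShortMap (M : List ℤ) (A : PreAI) (f : V (M.length + 1) →ₗ[R] V A.n) : Prop :=
  isShortMap M A f ∧ NontorsionClass A.toPreCplx (f (e ⟨0, Nat.succ_pos _⟩))

/-- The sequence of invariants `s_i(A)` (1-indexed in the paper; 0-indexed here):
`s k` is the `≤!`-maximum of the `(k+1)`-st symbols among standard complexes
locally mapping to `A` whose first `k` symbols are `s 0, …, s (k-1)`. -/
def IsInvariantSeq (A : PreAI) (s : ℕ → ℤ) : Prop :=
  ∀ k : ℕ,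
    (∃ M : List ℤ, StdParams M ∧ (∃ f, isLocalMap (symCplx M) A f) ∧
      ∀ i ≤ k, seqAt M i = s i) ∧
    (∀ M : List ℤ, StdParams M → (∃ f, isLocalMap (symCplx M) A f) →
      (∀ i < k, seqAt M i = s i) → leB (seqAt M k) (s k))

/-- Reduction mod `U` of a linear map, as an `F₂`-linear map. -/
def mapHat {m n : ℕ} (f : V m →ₗ[R] V n) : (Fin m → F2) →ₗ[F2] (Fin n → F2) where
  toFun x := fun j => ∑ i : Fin m, x i * (f (e i) j).coeff 0
  map_add' x y := by
    funext j
    simp [Pi.add_apply, add_mul, Finset.sum_add_distrib]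
  map_smul' c x := by
    funext j
    simp only [RingHom.id_apply, Pi.smul_apply, smul_eq_mul, Finset.mul_sum]
    exact Finset.sum_congr rfl fun i _ => by ring

/-- The induced action `ω̂` on `C/U`. -/
def wHat (C : PreAI) : (Fin C.n → F2) →ₗ[F2] (Fin C.n → F2) := mapHat (omega C)

end AI

/-!
The constant terms of the diagonal coefficients `f(T_i)_{T_i'}` agree along the common prefix.
Across an `a`-arrow this is `f ω ≡ ω f (mod U)` read off at the head of the arrow (both complexes
are reduced, so the homotopy terms vanish mod `U`); across a `b`-arrow it is `f ∂ = ∂ f` read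
off at the head, after cancelling the common power of `U`. At `i = 0` the constant term is
nonzero: `f(T_0)` is a nontorsion cycle, whereas in a standard complex every cycle with no
`T_0`-component is `U`-torsion (every other generator is the tail of a `b`-arrow, hence absent
from cycles, or its head, hence a boundary up to a power of `U`), and the grading makes the
`T_0'`-coefficient of `f(T_0)` a constant.
-/

namespace AI

section FreeModule

variable {m n : ℕ}

lemma linearMap_apply_eq_sum (g : V m →ₗ[R] V n) (x : V m) :
    g x = ∑ j, x j • g (e j) := by
  rw [LinearMap.pi_apply_eq_sum_univ g x]
  unfold e
  simp only [eq_comm]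

lemma modU_map (g : V m →ₗ[R] V n) {x : V m} (hx : modU x) : modU (g x) := fun l => by
  rw [linearMap_apply_eq_sum g x, Finset.sum_apply, finsetSum_coeff]
  exact Finset.sum_eq_zero fun j _ => by simp [mul_coeff_zero, hx j]

lemma ofMatrix_apply (c : ℕ → ℕ → R) (x : V n) (l : Fin n) :
    ofMatrix c x l = ∑ j, x j * c j l := rfl

lemma ofMatrix_apply_e (c : ℕ → ℕ → R) (i l : Fin n) : ofMatrix c (e i) l = c i l := by
  simp [ofMatrix, e]

lemma IsHomog.apply_eq_C {gr : Fin n → ℤ} {c : ℤ} {x : V n} (hx : IsHomog gr c x)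
    {j : Fin n} (hj : gr j = c) : x j = Polynomial.C ((x j).coeff 0) := by
  ext k
  rcases Nat.eq_zero_or_pos k with rfl | hk
  · simp
  · rw [coeff_C, if_neg hk.ne']
    by_contra hne
    have := hx j k hne
    omega

lemma smul_mem_range_of_forall (g : V n →ₗ[R] V n) (r : R) (x : V n)
    (h : ∀ l, x l = 0 ∨ r • e l ∈ LinearMap.range g) : r • x ∈ LinearMap.range g := by
  have hx := linearMap_apply_eq_sum LinearMap.id x
  simp only [LinearMap.id_apply] at hx
  rw [hx, Finset.smul_sum]
  refine Submodule.sum_mem _ fun l _ => ?_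
  rcases h l with h0 | hl
  · simp [h0]
  · rw [smul_comm]
    exact Submodule.smul_mem _ _ hl

end FreeModule

/-- `T_s ↦ r • T_t` is the only arrow of `ofMatrix c` out of `T_s` and the only one into `T_t`. -/
def IsArrow (c : ℕ → ℕ → R) (s t : ℕ) (r : R) : Prop :=
  (∀ l, c s l = if l = t then r else 0) ∧ ∀ j, c j t = if j = s then r else 0

namespace IsArrow

variable {m n : ℕ} {c c' : ℕ → ℕ → R} {r : R}

lemma ofMatrix_e {s t : Fin n} (h : IsArrow c s t r) : ofMatrix c (e s) = r • e t := by
  ext l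
  simp [ofMatrix_apply_e, h.1, e, Fin.val_inj]

lemma ofMatrix_apply {s t : Fin n} (h : IsArrow c s t r) (x : V n) :
    ofMatrix c x t = x s * r := by
  simp [ofMatrix, h.2, Fin.val_inj]

lemma apply_source_eq_zero {s t : Fin n} (h : IsArrow c s t r) (hr : r ≠ 0) {x : V n}
    (hx : ofMatrix c x = 0) : x s = 0 := by
  have := h.ofMatrix_apply x
  rw [hx] at this
  exact (mul_eq_zero.mp this.symm).resolve_right hr

lemma smul_e_mem_range {s t : Fin n} {k N : ℕ} (h : IsArrow c s t (Uu ^ k)) (hkN : k ≤ N) :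
    Uu ^ N • e t ∈ LinearMap.range (ofMatrix c : V n →ₗ[R] V n) :=
  ⟨Uu ^ (N - k) • e s, by rw [map_smul, h.ofMatrix_e, smul_smul, ← pow_add, Nat.sub_add_cancel hkN]⟩

lemma eq_zero_or_smul_e_mem_range {s t : Fin n} {k N : ℕ} (h : IsArrow c s t (Uu ^ k))
    (hkN : k ≤ N) {x : V n} (hx : ofMatrix c x = 0) {l : Fin n} (hl : l = s ∨ l = t) :
    x l = 0 ∨ Uu ^ N • e l ∈ LinearMap.range (ofMatrix c : V n →ₗ[R] V n) := by
  rcases hl with rfl | rfl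
  · exact Or.inl (h.apply_source_eq_zero (pow_ne_zero k X_ne_zero) hx)
  · exact Or.inr (h.smul_e_mem_range hkN)

lemma apply_eq_of_comp_eq {f : V m →ₗ[R] V n} (hf : f ∘ₗ ofMatrix c = ofMatrix c' ∘ₗ f)
    {s t : Fin m} {s' t' : Fin n} (h : IsArrow c s t r) (h' : IsArrow c' s' t' r) (hr : r ≠ 0) :
    f (e t) t' = f (e s) s' := by
  have := congrFun (LinearMap.congr_fun hf (e s)) t'
  simp only [LinearMap.comp_apply, h.ofMatrix_e, map_smul, h'.ofMatrix_apply] at this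
  exact mul_left_cancel₀ hr (this.trans (mul_comm _ _))

lemma coeff_zero_eq_of_modU {f : V m →ₗ[R] V n}
    (hf : ∀ x, modU (f (ofMatrix c x) + ofMatrix c' (f x)))
    {s t : Fin m} {s' t' : Fin n} (h : IsArrow c s t 1) (h' : IsArrow c' s' t' 1) :
    (f (e t) t').coeff 0 = (f (e s) s').coeff 0 := by
  have := hf (e s) t'
  rw [h.ofMatrix_e, one_smul, Pi.add_apply, h'.ofMatrix_apply, mul_one,
    coeff_add] at this
  exact CharTwo.add_eq_zero.mp this

end IsArrow

lemma isAIMorphism.modU_omega {C₁ C₂ : PreAI} {f : V C₁.n →ₗ[R] V C₂.n}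
    (hC₁ : Reduced C₁) (hC₂ : Reduced C₂) (hf : isAIMorphism C₁ C₂ f) (x : V C₁.n) :
    modU (f (omega C₁ x) + omega C₂ (f x)) := by
  obtain ⟨-, -, H, -, hH⟩ := hf
  intro j
  have hsum := hH x j
  have hHd := modU_map H (hC₁ x) j
  have hdH := hC₂ (H x) j
  simp only [omega, LinearMap.add_apply, LinearMap.comp_apply, LinearMap.id_apply, map_add,
    Pi.add_apply, coeff_add] at hsum hHd hdH ⊢
  linear_combination hsum - hHd - hdH + CharTwo.add_self_eq_zero ((f x j).coeff 0)

section Standard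

variable {M : List ℤ} {i : ℕ}

lemma isArrow_wCoef_of_eq_neg_one (hi : i % 2 = 0) (ha : seqAt M i = -1) :
    IsArrow (wCoef M) i (i + 1) 1 := by
  refine ⟨fun l => ?_, fun j => ?_⟩ <;> unfold wCoef <;> split_ifs <;> grind

lemma isArrow_wCoef_of_eq_one (hi : i % 2 = 0) (ha : seqAt M i = 1) :
    IsArrow (wCoef M) (i + 1) i 1 := by
  refine ⟨fun l => ?_, fun j => ?_⟩ <;> unfold wCoef <;> split_ifs <;> grind

lemma isArrow_dCoef_of_neg (hi : i % 2 = 1) (hb : seqAt M i < 0) :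
    IsArrow (dCoef M) i (i + 1) (Uu ^ (seqAt M i).natAbs) := by
  refine ⟨fun l => ?_, fun j => ?_⟩ <;> unfold dCoef <;> split_ifs <;> grind

lemma isArrow_dCoef_of_pos (hi : i % 2 = 1) (hb : 0 < seqAt M i) :
    IsArrow (dCoef M) (i + 1) i (Uu ^ (seqAt M i).natAbs) := by
  refine ⟨fun l => ?_, fun j => ?_⟩ <;> unfold dCoef <;> split_ifs <;> grind

lemma coeff_zero_dCoef (M : List ℤ) (i j : ℕ) : (dCoef M i j).coeff 0 = 0 := by
  unfold dCoef Uu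
  split_ifs <;> simp [coeff_X_pow] <;> omega

lemma dCoef_apply_zero (M : List ℤ) (j : ℕ) : dCoef M j 0 = 0 := by
  unfold dCoef
  rw [if_neg (by omega), if_neg (by omega)]

lemma dCoef_zero (M : List ℤ) (l : ℕ) : dCoef M 0 l = 0 := by
  unfold dCoef
  rw [if_neg (by omega), if_neg (by omega)]

lemma reduced_symCplx (M : List ℤ) : Reduced (symCplx M) := by
  intro x l
  change (ofMatrix (dCoef M) x l).coeff 0 = 0
  simp [ofMatrix_apply, finsetSum_coeff, mul_coeff_zero, coeff_zero_dCoef]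

lemma omega_symCplx (M : List ℤ) : omega (symCplx M) = ofMatrix (wCoef M) := by
  refine LinearMap.ext fun x => funext fun l => ?_
  change x l + ofMatrix (iCoef M) x l = ofMatrix (wCoef M) x l
  simp [ofMatrix_apply, iCoef, mul_add, Finset.sum_add_distrib, Fin.val_inj,
    CharTwo.add_cancel_left]

lemma nontorsionClass_e_zero (M : List ℤ) :
    NontorsionClass (symCplx M).toPreCplx (e (0 : Fin (M.length + 1))) := by
  refine ⟨?_, fun N ⟨y, hy⟩ => ?_⟩
  · ext (l : Fin (M.length + 1)) : 1
    change ofMatrix (dCoef M) (e 0) l = 0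
    rw [ofMatrix_apply_e, Fin.val_zero, dCoef_zero]
  · have h0 : (symCplx M).d y (0 : Fin (M.length + 1)) = 0 :=
      (ofMatrix_apply (n := M.length + 1) (dCoef M) y 0).trans
        (Finset.sum_eq_zero fun j _ => by rw [Fin.val_zero, dCoef_apply_zero, mul_zero])
    rw [hy] at h0
    change Uu ^ N * (if (0 : Fin (M.length + 1)) = 0 then 1 else 0) = 0 at h0
    simp [Uu] at h0

lemma StdParams.exists_isBdry_of_isCycle_of_apply_zero (hM : StdParams M) {x : V (M.length + 1)}
    (hx : IsCycle (symCplx M).toPreCplx x) (h0 : x 0 = 0) :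
    ∃ N, IsBdry (symCplx M).toPreCplx (Uu ^ N • x) := by
  set N := ∑ s ∈ Finset.range M.length, (seqAt M s).natAbs
  refine ⟨N, smul_mem_range_of_forall _ _ _ fun (l : Fin (M.length + 1)) => ?_⟩
  by_cases hl0 : (l : ℕ) = 0
  · exact Or.inl (by rwa [show l = 0 from Fin.ext hl0])
  obtain ⟨i, hi, hiM, hl⟩ : ∃ i, i % 2 = 1 ∧ i < M.length ∧ ((l : ℕ) = i ∨ (l : ℕ) = i + 1) := by
    have := hM.1
    refine ⟨if (l : ℕ) % 2 = 1 then l else l - 1, ?_⟩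
    split_ifs <;> omega
  have hb := hM.2 i hiM
  rw [if_neg (by omega)] at hb
  have hbN : (seqAt M i).natAbs ≤ N :=
    Finset.single_le_sum (f := fun s => (seqAt M s).natAbs) (fun _ _ => Nat.zero_le _)
      (Finset.mem_range.mpr hiM)
  have hl' : l = ⟨i, by omega⟩ ∨ l = ⟨i + 1, by omega⟩ := by
    rcases hl with hl | hl
    · exact Or.inl (Fin.ext hl)
    · exact Or.inr (Fin.ext hl)
  rcases hb.lt_or_gt with hneg | hpos
  · exact (isArrow_dCoef_of_neg (M := M) hi hneg).eq_zero_or_smul_e_mem_range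
      (s := ⟨i, by omega⟩) (t := ⟨i + 1, by omega⟩) hbN hx hl'
  · exact (isArrow_dCoef_of_pos (M := M) hi hpos).eq_zero_or_smul_e_mem_range
      (s := ⟨i + 1, by omega⟩) (t := ⟨i, by omega⟩) hbN hx hl'.symm

variable {M' : List ℤ} {f : V (M.length + 1) →ₗ[R] V (M'.length + 1)}

lemma isLocalMap.coeff_zero_apply_e_zero_ne_zero (hM' : StdParams M')
    (hf : isLocalMap (symCplx M) (symCplx M') f) : (f (e 0) 0).coeff 0 ≠ 0 := by
  intro hc
  have hnt := hf.2 _ (nontorsionClass_e_zero M)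
  have h0 : f (e 0) 0 = 0 := by
    have hhom : IsHomog (fun j : Fin (M'.length + 1) => stdGr M' j) (stdGr M 0 + 0) (f (e 0)) :=
      hf.1.1 _
    rw [hhom.apply_eq_C (j := 0) (by simp [stdGr]), hc, map_zero]
  obtain ⟨N, hN⟩ := hM'.exists_isBdry_of_isCycle_of_apply_zero hnt.1 h0
  exact hnt.2 N hN

lemma isAIMorphism.coeff_zero_apply_e_succ (hM : StdParams M)
    (hf : isAIMorphism (symCplx M) (symCplx M') f) (hiM : i < M.length) (hiM' : i < M'.length)
    (hsym : seqAt M i = seqAt M' i) :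
    (f (e ⟨i + 1, by omega⟩) ⟨i + 1, by omega⟩).coeff 0 =
      (f (e ⟨i, by omega⟩) ⟨i, by omega⟩).coeff 0 := by
  have hsymbol := hM.2 i hiM
  split_ifs at hsymbol with hi
  · have hω := hf.modU_omega (reduced_symCplx M) (reduced_symCplx M')
    simp only [omega_symCplx] at hω
    rcases hsymbol with ha | ha
    · exact ((isArrow_wCoef_of_eq_one hi ha).coeff_zero_eq_of_modU hω
        (isArrow_wCoef_of_eq_one (M := M') hi (hsym ▸ ha))).symm
    · exact (isArrow_wCoef_of_eq_neg_one hi ha).coeff_zero_eq_of_modU hω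
        (isArrow_wCoef_of_eq_neg_one (M := M') hi (hsym ▸ ha))
  · have hi : i % 2 = 1 := by omega
    have hpow : Uu ^ (seqAt M i).natAbs ≠ 0 := pow_ne_zero _ X_ne_zero
    rcases hsymbol.lt_or_gt with hb | hb
    · have h' := isArrow_dCoef_of_neg (M := M') hi (hsym ▸ hb)
      rw [← hsym] at h'
      rw [(isArrow_dCoef_of_neg hi hb).apply_eq_of_comp_eq (s := ⟨i, by omega⟩)
        (t := ⟨i + 1, by omega⟩) (s' := ⟨i, by omega⟩) (t' := ⟨i + 1, by omega⟩) hf.2.1 h' hpow]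
    · have h' := isArrow_dCoef_of_pos (M := M') hi (hsym ▸ hb)
      rw [← hsym] at h'
      rw [(isArrow_dCoef_of_pos hi hb).apply_eq_of_comp_eq (s := ⟨i + 1, by omega⟩)
        (t := ⟨i, by omega⟩) (s' := ⟨i + 1, by omega⟩) (t' := ⟨i, by omega⟩) hf.2.1 h' hpow]

end Standard

/-- rigidity of local maps between standard complexes with a
common prefix: if the parameter sequences agree up to index `k` and `f` is
local, then `f(T_i)` is supported by `T_i'` for all `0 ≤ i ≤ k`. -/
theorem local_map_supported (M M' : List ℤ) (hM : StdParams M) (hM' : StdParams M')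
    (k : ℕ) (hkM : k ≤ M.length) (hkM' : k ≤ M'.length)
    (hagree : ∀ i < k, seqAt M i = seqAt M' i)
    (f : V (M.length + 1) →ₗ[R] V (M'.length + 1))
    (hf : isLocalMap (symCplx M) (symCplx M') f) :
    ∀ i : ℕ, ∀ _hi : i ≤ k, f (e ⟨i, by omega⟩) ⟨i, by omega⟩ ≠ 0 := by
  have hdiag : ∀ i (hi : i ≤ k),
      (f (e ⟨i, by omega⟩) ⟨i, by omega⟩).coeff 0 = (f (e 0) 0).coeff 0 := by
    intro i
    induction i with
    | zero => exact fun _ => rfl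
    | succ i ih =>
      intro hi
      rw [hf.1.coeff_zero_apply_e_succ hM (by omega) (by omega) (hagree i hi), ih (by omega)]
  intro i hi hzero
  apply hf.coeff_zero_apply_e_zero_ne_zero hM'
  rw [← hdiag i hi, hzero, coeff_zero]

end AI
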